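/- Let b ≥ 2 be an integer. Let S_1 be the b×b lower-triangular complex matrix all of whose entries on or below the diagonal equal 1, let M_1 be the b×b matrix with 1's on the diagonal, -1's on the subdiagonal, and 0 elsewhere, let T_1 = M_1ᵀ, and set U_1 = S_1 T_1 and V_1 = T_1 S_1. Then the set of eigenvalues of U_1 and the set of eigenvalues of V_1 are both equal to the set of complex roots of the polynomial equation -1 + r - r² + ⋯ + (-1)^{b+1} r^b = 0. -/

import Mathlib

open Matrix

/-- The matrix `S_1`: the `b×b` lower-triangular complex matrix all of whose entries on or
below the diagonal equal `1`. -/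
def S1 (b : ℕ) : Matrix (Fin b) (Fin b) ℂ :=
  Matrix.of fun j k => if (k : ℕ) ≤ (j : ℕ) then 1 else 0

/-- The matrix `M_1`: the `b×b` matrix with `1`'s on the diagonal, `-1`'s on the subdiagonal,
and `0` elsewhere. -/
def M1 (b : ℕ) : Matrix (Fin b) (Fin b) ℂ :=
  Matrix.of fun j k =>
    if (j : ℕ) = (k : ℕ) then 1 else if (j : ℕ) = (k : ℕ) + 1 then -1 else 0

/-! `U₁ = S₁T₁` and `V₁ = T₁S₁` have the same characteristic polynomial, so it suffices to treat
`V₁`. Row `i < b - 1` of `V₁` is `-eᵢ₊₁` and its last row is all ones, so `V₁` is a companion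
matrix: an eigenvector for `r` satisfies `vᵢ₊₁ = -r vᵢ`, hence is a multiple of `((-r)ⁱ)ᵢ`, and
the last row then reads `∑_{i<b} (-r)ⁱ = r (-r)ᵇ⁻¹`, i.e. `∑_{i≤b} (-r)ⁱ = 0`. -/

namespace Matrix

variable {n R K : Type*} [Fintype n] [DecidableEq n]

theorem isUnit_sub_smul_one_iff_isUnit_eval_charpoly [CommRing R] (A : Matrix n n R) (r : R) :
    IsUnit (A - r • 1) ↔ IsUnit (A.charpoly.eval r) := by
  rw [eval_charpoly, ← isUnit_iff_isUnit_det, ← IsUnit.neg_iff, neg_sub, scalar_apply,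
    smul_one_eq_diagonal]

theorem isUnit_mul_sub_smul_one_comm [CommRing R] (A B : Matrix n n R) (r : R) :
    IsUnit (A * B - r • 1) ↔ IsUnit (B * A - r • 1) := by
  rw [isUnit_sub_smul_one_iff_isUnit_eval_charpoly, isUnit_sub_smul_one_iff_isUnit_eval_charpoly,
    charpoly_mul_comm]

theorem not_isUnit_sub_smul_one_iff [Field K] (A : Matrix n n K) (r : K) :
    ¬IsUnit (A - r • 1) ↔ ∃ v ≠ 0, A *ᵥ v = r • v := by
  rw [isUnit_iff_isUnit_det, isUnit_iff_ne_zero, not_not, ← exists_mulVec_eq_zero_iff]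
  simp only [sub_mulVec, smul_mulVec, one_mulVec, sub_eq_zero]

end Matrix

section

variable {b : ℕ}

theorem transpose_M1_mul_apply (A : Matrix (Fin b) (Fin b) ℂ) (i k : Fin b) :
    ((M1 b)ᵀ * A) i k = A i k - if h : (i : ℕ) + 1 < b then A ⟨i + 1, h⟩ k else 0 := by
  have hsummand : ∀ j : Fin b, (M1 b)ᵀ i j * A j k =
      (if j = i then A j k else 0) - if (j : ℕ) = i + 1 then A j k else 0 := by
    intro j
    simp only [transpose_apply, M1, of_apply, Fin.ext_iff]
    split_ifs <;> first | omega | ring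
  have hnext : (∑ j : Fin b, if (j : ℕ) = i + 1 then A j k else 0) =
      if h : (i : ℕ) + 1 < b then A ⟨i + 1, h⟩ k else 0 := by
    split_ifs with h
    · simp [← Fin.ext_iff (b := ⟨i + 1, h⟩)]
    · exact Finset.sum_eq_zero fun j _ => if_neg (by omega)
  rw [mul_apply, Finset.sum_congr rfl fun j _ => hsummand j, Finset.sum_sub_distrib,
    Finset.sum_ite_eq', if_pos (Finset.mem_univ i), hnext]

theorem transpose_M1_mul_S1_mulVec (v : Fin b → ℂ) (i : Fin b) :
    (((M1 b)ᵀ * S1 b) *ᵥ v) i = if h : (i : ℕ) + 1 < b then -v ⟨i + 1, h⟩ else ∑ k, v k := by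
  simp only [mulVec, dotProduct, transpose_M1_mul_apply, S1, of_apply]
  split_ifs with h
  · rw [Fintype.sum_eq_single ⟨i + 1, h⟩ fun k hk => ?_]
    · simp
    · have hk' : (k : ℕ) ≠ i + 1 := fun hk' => hk (Fin.ext hk')
      split_ifs <;> first | omega | simp
  · refine Finset.sum_congr rfl fun k _ => ?_
    rw [if_pos (by omega)]
    ring

theorem eq_smul_geom_of_transpose_M1_mul_S1_mulVec_eq_smul (hb : 0 < b) {v : Fin b → ℂ} {r : ℂ}
    (hv : ((M1 b)ᵀ * S1 b) *ᵥ v = r • v) : v = v ⟨0, hb⟩ • fun i : Fin b => (-r) ^ (i : ℕ) := by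
  funext ⟨i, hi⟩
  induction i with
  | zero => simp
  | succ m ih =>
    have hrow := congrFun hv ⟨m, by omega⟩
    rw [transpose_M1_mul_S1_mulVec, dif_pos hi] at hrow
    simp only [Pi.smul_apply, smul_eq_mul] at hrow ih ⊢
    rw [pow_succ, ← mul_assoc, ← ih (by omega)]
    linear_combination -hrow

theorem transpose_M1_mul_S1_mulVec_geom_eq_smul_iff (hb : 0 < b) (r : ℂ) :
    ((M1 b)ᵀ * S1 b) *ᵥ (fun i : Fin b => (-r) ^ (i : ℕ)) = r • (fun i : Fin b => (-r) ^ (i : ℕ)) ↔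
      ∑ i ∈ Finset.range (b + 1), (-r) ^ i = 0 := by
  obtain ⟨n, rfl⟩ : ∃ n, b = n + 1 := ⟨b - 1, by omega⟩
  have hsum : ∑ i ∈ Finset.range (n + 1 + 1), (-r) ^ i =
      ∑ k : Fin (n + 1), (-r) ^ (k : ℕ) - r * (-r) ^ n := by
    rw [Finset.sum_range_succ, Fin.sum_univ_eq_sum_range (fun k => (-r) ^ k), pow_succ]
    ring
  rw [funext_iff, hsum, sub_eq_zero]
  constructor
  · intro h
    simpa [transpose_M1_mul_S1_mulVec] using h (Fin.last n)
  · intro h i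
    rw [transpose_M1_mul_S1_mulVec]
    split_ifs with hi
    · simp only [Pi.smul_apply, smul_eq_mul, pow_succ]
      ring
    · obtain rfl : i = Fin.last n := Fin.ext (by simp; omega)
      simpa using h

theorem exists_transpose_M1_mul_S1_mulVec_eq_smul_iff (r : ℂ) :
    (∃ v ≠ 0, ((M1 b)ᵀ * S1 b) *ᵥ v = r • v) ↔ ∑ i ∈ Finset.range (b + 1), (-r) ^ i = 0 := by
  rcases Nat.eq_zero_or_pos b with rfl | hb
  · simp [funext_iff]
  rw [← transpose_M1_mul_S1_mulVec_geom_eq_smul_iff hb]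
  constructor
  · rintro ⟨v, hv0, hv⟩
    have hgeom := eq_smul_geom_of_transpose_M1_mul_S1_mulVec_eq_smul hb hv
    have hc : v ⟨0, hb⟩ ≠ 0 := fun hc => hv0 (by rw [hgeom, hc, zero_smul])
    rw [hgeom, mulVec_smul, smul_comm] at hv
    exact smul_right_injective _ hc hv
  · intro h
    exact ⟨_, fun h0 => by simpa using congrFun h0 ⟨0, hb⟩, h⟩

end

theorem Finset.sum_range_neg_one_pow_succ_mul_pow {R : Type*} [CommRing R] (m : ℕ) (r : R) :
    ∑ i ∈ Finset.range m, (-1 : R) ^ (i + 1) * r ^ i = -∑ i ∈ Finset.range m, (-r) ^ i := by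
  rw [← Finset.sum_neg_distrib]
  refine Finset.sum_congr rfl fun i _ => ?_
  rw [neg_pow]
  ring

theorem eigenvalues_U1_V1_general (b : ℕ) :
    ({r : ℂ | ¬IsUnit (S1 b * (M1 b)ᵀ - r • (1 : Matrix (Fin b) (Fin b) ℂ))} =
        {r : ℂ | ∑ i ∈ Finset.range (b + 1), (-1 : ℂ) ^ (i + 1) * r ^ i = 0}) ∧
      {r : ℂ | ¬IsUnit ((M1 b)ᵀ * S1 b - r • (1 : Matrix (Fin b) (Fin b) ℂ))} =
        {r : ℂ | ∑ i ∈ Finset.range (b + 1), (-1 : ℂ) ^ (i + 1) * r ^ i = 0} := by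
  have hV (r : ℂ) : ¬IsUnit ((M1 b)ᵀ * S1 b - r • 1) ↔
      ∑ i ∈ Finset.range (b + 1), (-1 : ℂ) ^ (i + 1) * r ^ i = 0 := by
    rw [not_isUnit_sub_smul_one_iff, exists_transpose_M1_mul_S1_mulVec_eq_smul_iff,
      Finset.sum_range_neg_one_pow_succ_mul_pow, neg_eq_zero]
  exact ⟨Set.ext fun r => (isUnit_mul_sub_smul_one_comm _ _ r).not.trans (hV r), Set.ext hV⟩

/-- Let `T_1 = M_1ᵀ`, `U_1 = S_1 T_1` and `V_1 = T_1 S_1`. The set of eigenvalues of `U_1`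
(scalars `r` with `U_1 - r·I` singular) and the set of eigenvalues of `V_1` are both equal to
the set of complex roots of `-1 + r - r² + ⋯ + (-1)^{b+1} r^b = 0`. -/
theorem eigenvalues_U1_V1 (b : ℕ) (hb : 2 ≤ b) :
    ({r : ℂ | ¬IsUnit (S1 b * (M1 b)ᵀ - r • (1 : Matrix (Fin b) (Fin b) ℂ))} =
        {r : ℂ | ∑ i ∈ Finset.range (b + 1), (-1 : ℂ) ^ (i + 1) * r ^ i = 0}) ∧
      {r : ℂ | ¬IsUnit ((M1 b)ᵀ * S1 b - r • (1 : Matrix (Fin b) (Fin b) ℂ))} =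
        {r : ℂ | ∑ i ∈ Finset.range (b + 1), (-1 : ℂ) ^ (i + 1) * r ^ i = 0} :=
  eigenvalues_U1_V1_general b
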